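/- Let ρ ∈ ℝ with |ρ| < 1/2, let τ ≥ 1/2 and let 0 < x < 1. Then | ₁F₁(1/2 + ρ + iτ; 1 + 2iτ; −x) | ≤ e^{−x/2} · [ 1 + (1/(2τ)) · ( (1 − x)^{−2(1+|ρ|)} − e^x ) ]. -/

import Mathlib

open MeasureTheory

/-- Complex Pochhammer symbol `(a)_m = a (a+1) ⋯ (a+m−1)`. -/
noncomputable def pochC (a : ℂ) (m : ℕ) : ℂ := ∏ j ∈ Finset.range m, (a + j)

/-- Confluent hypergeometric series `₁F₁(a; b; z) = Σ_{k≥0} (a)_k z^k / ((b)_k k!)`. -/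
noncomputable def oneF1 (a b z : ℂ) : ℂ :=
  ∑' k : ℕ, pochC a k * z ^ k / (pochC b k * (Nat.factorial k : ℂ))

noncomputable def Qp (σ : ℝ) (k : ℕ) : ℝ := ∏ j ∈ Finset.range k, (2 + σ + j)

lemma Qp_succ (σ : ℝ) (k : ℕ) : Qp σ (k + 1) = Qp σ k * (2 + σ + k) :=
  Finset.prod_range_succ _ _

lemma one_le_Qp {σ : ℝ} (h0 : 0 ≤ σ) (k : ℕ) : 1 ≤ Qp σ k := by
  induction k with
  | zero => simp [Qp]
  | succ k ih =>
    rw [Qp_succ]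
    have : (0:ℝ) ≤ (k:ℝ) := Nat.cast_nonneg k
    nlinarith

lemma pochC_succ (a : ℂ) (k : ℕ) : pochC a (k + 1) = pochC a k * (a + k) :=
  Finset.prod_range_succ _ _

lemma coeff_bound (ρ τ : ℝ) (hρ : |ρ| < 1/2) (hτ : 1/2 ≤ τ) (k : ℕ) :
    ‖pochC ((1:ℂ)/2 + ρ + Complex.I * τ) k / pochC (1 + 2 * Complex.I * τ) k
        - (1/2)^k‖
      ≤ (1/(2*τ)) * (1/2)^k * (Qp (2*|ρ|) k - 1) := by
  have hτ0 : (0:ℝ) < τ := by linarith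
  set a : ℂ := (1:ℂ)/2 + ρ + Complex.I * τ with ha
  set b : ℂ := 1 + 2 * Complex.I * τ with hb
  have hbk : ∀ m : ℕ, b + m ≠ 0 := by
    intro m h
    have him := congrArg Complex.im h
    simp [hb] at him
    linarith
  induction k with
  | zero => simp [pochC, Qp]
  | succ k ih =>
    have hQ1 : 1 ≤ Qp (2*|ρ|) k := one_le_Qp (by positivity) k
    have hQ0 : (0:ℝ) ≤ Qp (2*|ρ|) k := by linarith
    have hpk : (0:ℝ) < (1/2:ℝ)^k := by positivity
    have hrc : (a + k) / (b + k) - 1/2 = ((2*ρ + k : ℝ) : ℂ) / (2 * (b + k)) := by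
      have h2 : (2:ℂ) * (a + k) - (b + k) = ((2*ρ + k : ℝ) : ℂ) := by
        push_cast [ha, hb]; ring
      rw [← h2]
      field_simp [hbk k]
    have habs_bk : 2 * τ ≤ ‖b + k‖ := by
      have him : (b + (k:ℂ)).im = 2 * τ := by simp [hb]
      calc 2 * τ = |(b + (k:ℂ)).im| := by rw [him, abs_of_nonneg (by linarith)]
        _ ≤ ‖b + k‖ := Complex.abs_im_le_norm _
    have hrabs : ‖(a + k) / (b + k) - 1/2‖ ≤ (2*|ρ| + k) / (4 * τ) := by
      rw [hrc, norm_div, norm_mul]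
      have h1 : ‖((2*ρ + k : ℝ) : ℂ)‖ ≤ 2*|ρ| + k := by
        rw [Complex.norm_real, Real.norm_eq_abs]
        have h := abs_add_le (2*ρ) (k:ℝ)
        rw [abs_mul] at h
        have hk : |(k:ℝ)| = k := abs_of_nonneg (Nat.cast_nonneg k)
        rw [hk] at h
        simpa using h
      have h2 : (4:ℝ) * τ ≤ ‖(2:ℂ)‖ * ‖b + k‖ := by
        simp only [Complex.norm_two]
        nlinarith
      exact div_le_div₀ (by positivity) h1 (by linarith) h2
    have hck : ‖pochC a k / pochC b k‖ ≤ (1/2)^k * Qp (2*|ρ|) k := by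
      have habs2 : ‖(1/2:ℂ)^k‖ = (1/2:ℝ)^k := by
        rw [norm_pow]; norm_num
      have htri : ‖pochC a k / pochC b k‖
          ≤ ‖pochC a k / pochC b k - (1/2)^k‖ + (1/2:ℝ)^k := by
        rw [← habs2]
        simpa using norm_add_le (pochC a k / pochC b k - (1/2)^k) ((1/2)^k)
      have h1τ : 1/(2*τ) ≤ 1 := by
        rw [div_le_one (by linarith)]; linarith
      have h5 : (1/(2*τ)) * (1/2:ℝ)^k * (Qp (2*|ρ|) k - 1) ≤ (1/2:ℝ)^k * (Qp (2*|ρ|) k - 1) := by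
        have hnn : (0:ℝ) ≤ (1/2:ℝ)^k * (Qp (2*|ρ|) k - 1) := by nlinarith
        nlinarith
      nlinarith [ih]
    have hstep : pochC a (k+1) / pochC b (k+1) - (1/2)^(k+1)
        = (pochC a k / pochC b k) * ((a + k)/(b + k) - 1/2)
          + (1/2) * (pochC a k / pochC b k - (1/2)^k) := by
      rw [pochC_succ, pochC_succ, mul_div_mul_comm]
      ring
    rw [hstep]
    have t1 := norm_add_le ((pochC a k / pochC b k) * ((a + k)/(b + k) - 1/2))
      ((1/2 : ℂ) * (pochC a k / pochC b k - (1/2)^k))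
    rw [norm_mul, norm_mul] at t1
    have habs_half : ‖(1/2 : ℂ)‖ = 1/2 := by norm_num
    rw [habs_half] at t1
    have t2 : ‖pochC a k / pochC b k‖ * ‖(a + k)/(b + k) - 1/2‖
        ≤ ((1/2)^k * Qp (2*|ρ|) k) * ((2*|ρ| + k) / (4 * τ)) := by
      apply mul_le_mul hck hrabs (norm_nonneg _) (by positivity)
    have t3 : (1/2 : ℝ) * ‖pochC a k / pochC b k - (1/2)^k‖
        ≤ (1/2) * ((1/(2*τ)) * (1/2)^k * (Qp (2*|ρ|) k - 1)) := by
      linarith [ih]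
    have t4 : ((1/2:ℝ)^k * Qp (2*|ρ|) k) * ((2*|ρ| + k) / (4 * τ))
          + (1/2) * ((1/(2*τ)) * (1/2)^k * (Qp (2*|ρ|) k - 1))
        = (1/(2*τ)) * (1/2)^(k+1) * (Qp (2*|ρ|) (k+1) - 1) - (1/2)^k * Qp (2*|ρ|) k / (4*τ) := by
      rw [Qp_succ, pow_succ]
      field_simp
      ring
    have t5 : (0:ℝ) ≤ (1/2)^k * Qp (2*|ρ|) k / (4*τ) := by positivity
    linarith

lemma Qp_zero (k : ℕ) : Qp 0 k = (k+1) * (k.factorial : ℝ) := by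
  induction k with
  | zero => simp [Qp]
  | succ k ih =>
    rw [Qp_succ, ih, Nat.factorial_succ]
    push_cast
    ring

lemma Qp_one (k : ℕ) : Qp 1 k = (k+1) * (k+2) * (k.factorial : ℝ) / 2 := by
  induction k with
  | zero => simp [Qp]
  | succ k ih =>
    rw [Qp_succ, ih, Nat.factorial_succ]
    push_cast
    ring

lemma Qp_le_Qp {σ : ℝ} (h0 : 0 ≤ σ) (h1 : σ ≤ 1) (k : ℕ) :
    Qp σ k ≤ (1 - σ) * Qp 0 k + σ * Qp 1 k := by
  induction k with
  | zero => simp [Qp]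
  | succ k ih =>
    have hA : (1:ℝ) ≤ Qp 0 k := one_le_Qp le_rfl k
    have hAB : Qp 0 k ≤ Qp 1 k := by
      rw [Qp_zero, Qp_one, le_div_iff₀ (by norm_num : (0:ℝ) < 2)]
      have hk : (0:ℝ) ≤ (k:ℝ) := Nat.cast_nonneg k
      have hf : (1:ℝ) ≤ (k.factorial : ℝ) := by exact_mod_cast Nat.one_le_iff_ne_zero.2 k.factorial_ne_zero
      nlinarith [mul_nonneg (mul_nonneg (by linarith : (0:ℝ) ≤ (k:ℝ)+1) (by linarith : (0:ℝ) ≤ (k.factorial:ℝ))) hk]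
    rw [Qp_succ, Qp_succ, Qp_succ]
    have hk : (0:ℝ) ≤ (k:ℝ) := Nat.cast_nonneg k
    nlinarith [mul_le_mul_of_nonneg_right ih (show (0:ℝ) ≤ 2+σ+k by linarith),
      mul_nonneg (mul_nonneg h0 (by linarith : (0:ℝ) ≤ 1-σ)) (by linarith : (0:ℝ) ≤ Qp 1 k - Qp 0 k)]

lemma choose_two_real (k : ℕ) : (((k+2).choose 2 : ℕ) : ℝ) = (k+1) * (k+2) / 2 := by
  induction k with
  | zero => norm_num
  | succ k ih =>
    have hp : (k+1+2).choose 2 = (k+2).choose 1 + (k+2).choose 2 := Nat.choose_succ_succ (k+2) 1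
    rw [hp]
    push_cast [Nat.choose_one_right, ih]
    ring

lemma term_le (σ y : ℝ) (h0 : 0 ≤ σ) (h1 : σ ≤ 1) (hy : 0 ≤ y) (k : ℕ) :
    Qp σ k * y^k / (k.factorial : ℝ)
      ≤ (1-σ) * ((k+1).choose 1 : ℕ) * y^k + σ * ((k+2).choose 2 : ℕ) * y^k := by
  have hf : (0:ℝ) < (k.factorial : ℝ) := by exact_mod_cast k.factorial_pos
  have hQ : Qp σ k ≤ (1 - σ) * Qp 0 k + σ * Qp 1 k := Qp_le_Qp h0 h1 k
  have hyk : (0:ℝ) ≤ y^k := by positivity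
  rw [div_le_iff₀ hf]
  rw [Nat.choose_one_right, choose_two_real, Qp_zero] at *
  push_cast
  rw [Qp_one] at hQ
  nlinarith [mul_le_mul_of_nonneg_right hQ hyk]

lemma W_le (σ y : ℝ) (h0 : 0 ≤ σ) (h1 : σ ≤ 1) (hy0 : 0 ≤ y) (hy1 : y < 1) :
    Summable (fun k => Qp σ k * y^k / (k.factorial : ℝ)) ∧
    ∑' k, Qp σ k * y^k / (k.factorial : ℝ) ≤ (1-σ) * (1/(1-y)^2) + σ * (1/(1-y)^3) := by
  have hy : ‖y‖ < 1 := by rw [Real.norm_eq_abs, abs_of_nonneg hy0]; exact hy1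
  have hg1 : HasSum (fun n : ℕ => (((n+1).choose 1 : ℕ) : ℝ) * y^n) (1/(1-y)^2) :=
    hasSum_choose_mul_geometric_of_norm_lt_one 1 hy
  have hg2 : HasSum (fun n : ℕ => (((n+2).choose 2 : ℕ) : ℝ) * y^n) (1/(1-y)^3) :=
    hasSum_choose_mul_geometric_of_norm_lt_one 2 hy
  have hg : HasSum (fun n : ℕ => (1-σ) * ((n+1).choose 1 : ℕ) * y^n + σ * ((n+2).choose 2 : ℕ) * y^n)
      ((1-σ) * (1/(1-y)^2) + σ * (1/(1-y)^3)) := by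
    have := (hg1.mul_left (1-σ)).add (hg2.mul_left σ)
    convert this using 2 with n
    · rfl
    ring
  have hle : ∀ k, Qp σ k * y^k / (k.factorial : ℝ)
      ≤ (1-σ) * ((k+1).choose 1 : ℕ) * y^k + σ * ((k+2).choose 2 : ℕ) * y^k :=
    term_le σ y h0 h1 hy0
  have hnn : ∀ k, (0:ℝ) ≤ Qp σ k * y^k / (k.factorial : ℝ) := by
    intro k
    have := one_le_Qp h0 k
    positivity
  have hsum : Summable (fun k => Qp σ k * y^k / (k.factorial : ℝ)) :=
    Summable.of_nonneg_of_le hnn hle hg.summable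
  exact ⟨hsum, (Summable.tsum_le_tsum hle hsum hg.summable).trans_eq hg.tsum_eq⟩

lemma rpow_final (σ x : ℝ) (h0 : 0 ≤ σ) (h1 : σ ≤ 1) (hx0 : 0 < x) (hx1 : x < 1) :
    (1-σ) * (1/(1-x/2)^2) + σ * (1/(1-x/2)^3) ≤ Real.exp (-x/2) * (1-x) ^ (-(2+σ) : ℝ) := by
  have h1x : (0:ℝ) < 1 - x := by linarith
  have hhx : (0:ℝ) < 1 - x/2 := by linarith
  have hσx : (0:ℝ) < 1 - σ*x := by nlinarith
  have hA : (1-x) ^ (-(2+σ) : ℝ) = (1-x) ^ ((-2) : ℝ) * (1-x) ^ (-σ) := by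
    rw [← Real.rpow_add h1x]; ring_nf
  have hB : (1-x) ^ ((-2) : ℝ) = 1/(1-x)^2 := by
    rw [show ((-2):ℝ) = -((2:ℕ):ℝ) by norm_num, Real.rpow_neg h1x.le, Real.rpow_natCast]
    rw [one_div]
  have hC : (1-σ*x)⁻¹ ≤ (1-x) ^ (-σ : ℝ) := by
    have hb : (1-x) ^ (σ : ℝ) ≤ 1 - σ*x := by
      have := rpow_one_add_le_one_add_mul_self (s := -x) (by linarith) h0 h1
      calc (1-x) ^ (σ:ℝ) = (1 + (-x)) ^ (σ:ℝ) := by ring_nf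
        _ ≤ 1 + σ * (-x) := this
        _ = 1 - σ*x := by ring
    rw [Real.rpow_neg h1x.le]
    exact inv_anti₀ (Real.rpow_pos_of_pos h1x σ) hb
  have hD : 1 - x/2 ≤ Real.exp (-x/2) := by
    have := Real.add_one_le_exp (-x/2)
    linarith
  have hE : (1-σ) * (1/(1-x/2)^2) + σ * (1/(1-x/2)^3)
      ≤ (1-x/2) * (1/(1-x)^2) * (1-σ*x)⁻¹ := by
    have key : (1-x/2)^4 - ((1-σ)*(1-x/2)+σ)*(1-x)^2*(1-σ*x)
        = x*((1-x)/2 + (σ/2)*(1-x)^3 + (x*σ^2/2)*(1-x)^2 + x^3/16) := by ring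
    have hpos : (0:ℝ) ≤ x*((1-x)/2 + (σ/2)*(1-x)^3 + (x*σ^2/2)*(1-x)^2 + x^3/16) := by positivity
    have hcross : ((1-σ)*(1-x/2)+σ)*(1-x)^2*(1-σ*x) ≤ (1-x/2)^4 := by linarith
    have habs : ∀ t : ℝ, t ≠ 0 → (1-σ) * (1/t^2) + σ * (1/t^3) = ((1-σ)*t+σ)/t^3 := by
      intro t ht
      field_simp
    have hL : (1-σ) * (1/(1-x/2)^2) + σ * (1/(1-x/2)^3) = ((1-σ)*(1-x/2)+σ)/(1-x/2)^3 :=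
      habs _ hhx.ne'
    have habs2 : ∀ a b c : ℝ, a * (1/b) * c⁻¹ = a/(b*c) := by
      intro a b c
      rw [one_div, mul_assoc, ← mul_inv, ← div_eq_mul_inv]
    have hR : (1-x/2) * (1/(1-x)^2) * (1-σ*x)⁻¹ = (1-x/2)/((1-x)^2*(1-σ*x)) :=
      habs2 _ _ _
    rw [hL, hR, div_le_div_iff₀ (by positivity) (by positivity)]
    nlinarith [hcross]
  calc (1-σ) * (1/(1-x/2)^2) + σ * (1/(1-x/2)^3)
      ≤ (1-x/2) * (1/(1-x)^2) * (1-σ*x)⁻¹ := hE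
    _ ≤ Real.exp (-x/2) * (1/(1-x)^2) * ((1-x) ^ (-σ : ℝ)) := by
        apply mul_le_mul (mul_le_mul hD le_rfl (by positivity) (Real.exp_pos _).le) hC
          (by positivity) (by positivity)
    _ = Real.exp (-x/2) * (1-x) ^ (-(2+σ) : ℝ) := by
        rw [hA, hB]; ring

theorem oneF1_bound (ρ : ℝ) (hρ : |ρ| < 1/2) (τ : ℝ) (hτ : 1/2 ≤ τ)
    (x : ℝ) (hx0 : 0 < x) (hx1 : x < 1) :
    ‖oneF1 ((1:ℂ)/2 + ρ + Complex.I * τ) (1 + 2 * Complex.I * τ) (-(x : ℂ))‖ ≤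
      Real.exp (-x/2) *
        (1 + (1 / (2 * τ)) * ((1 - x) ^ (-(2 * (1 + |ρ|))) - Real.exp x)) := by
  have hτ0 : (0:ℝ) < τ := by linarith
  set σ : ℝ := 2 * |ρ| with hσdef
  have hσ0 : 0 ≤ σ := by positivity
  have hσ1 : σ ≤ 1 := by rw [hσdef]; linarith
  set y : ℝ := x / 2 with hydef
  have hy0 : 0 ≤ y := by positivity
  have hy1 : y < 1 := by rw [hydef]; linarith
  set a : ℂ := (1:ℂ)/2 + ρ + Complex.I * τ with ha
  set b : ℂ := 1 + 2 * Complex.I * τ with hb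
  set t : ℕ → ℂ := fun k => pochC a k * (-(x:ℂ))^k / (pochC b k * (Nat.factorial k : ℂ)) with htdef
  set u : ℕ → ℂ := fun k => (-(x:ℂ)/2)^k / (Nat.factorial k : ℂ) with hudef
  set w : ℕ → ℝ := fun k => Qp σ k * y^k / (Nat.factorial k : ℝ) with hwdef
  set V : ℕ → ℝ := fun k => (1/(2*τ)) * (w k - y^k / (Nat.factorial k : ℝ)) with hVdef
  have hc : ∀ k, t k = (pochC a k / pochC b k) * ((-(x:ℂ))^k / (Nat.factorial k : ℂ)) := by
    intro k
    rw [htdef]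
    exact mul_div_mul_comm _ _ _ _
  have hu2 : ∀ k, u k = (1/2:ℂ)^k * ((-(x:ℂ))^k / (Nat.factorial k : ℂ)) := by
    intro k
    rw [hudef]
    simp only
    rw [show (-(x:ℂ)/2) = (1/2 : ℂ) * (-(x:ℂ)) by ring, mul_pow, mul_div_assoc]
  have hdiff : ∀ k, t k - u k
      = (pochC a k / pochC b k - (1/2)^k) * ((-(x:ℂ))^k / (Nat.factorial k : ℂ)) := by
    intro k
    rw [hc, hu2, ← sub_mul]
  have hyx : ∀ k : ℕ, (1/2:ℝ)^k * x^k = y^k := by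
    intro k
    rw [← mul_pow, hydef]
    congr 1
    ring
  have hnorm : ∀ k, ‖t k - u k‖ ≤ V k := by
    intro k
    rw [hdiff k, hVdef, hwdef]
    simp only
    rw [norm_mul]
    have h1 : ‖(-(x:ℂ))^k / (Nat.factorial k : ℂ)‖ = x^k / (Nat.factorial k : ℝ) := by
      rw [norm_div, norm_pow]
      have hnx : ‖(-(x:ℂ))‖ = x := by
        rw [norm_neg, Complex.norm_real, Real.norm_eq_abs, abs_of_pos hx0]
      rw [hnx]
      congr 1
      exact Complex.norm_natCast _
    rw [h1]
    have h2 := coeff_bound ρ τ hρ hτ k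
    have h3 : ‖pochC a k / pochC b k - (1/2:ℂ)^k‖ * (x^k / (Nat.factorial k : ℝ))
        ≤ ((1/(2*τ)) * (1/2)^k * (Qp σ k - 1)) * (x^k / (Nat.factorial k : ℝ)) :=
      mul_le_mul_of_nonneg_right h2 (by positivity)
    refine h3.trans_eq ?_
    rw [← hyx k]
    ring
  -- summability facts
  have hWle := W_le σ y hσ0 hσ1 hy0 hy1
  have hw_sum : Summable w := hWle.1
  have hey : Summable (fun k : ℕ => y^k / (Nat.factorial k : ℝ)) :=
    NormedSpace.expSeries_div_summable y
  have hV_sum : Summable V := ((hw_sum.sub hey).mul_left _)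
  have hu_sum : Summable u := NormedSpace.expSeries_div_summable (-(x:ℂ)/2)
  have hdiff_sum : Summable (fun k => t k - u k) :=
    Summable.of_norm_bounded hV_sum hnorm
  have ht_sum : Summable t := by
    have := hdiff_sum.add hu_sum
    convert this using 1
    funext k
    ring
  -- tsum of u
  have hu_tsum : (∑' k, u k) = Complex.exp (-(x:ℂ)/2) := by
    rw [Complex.exp_eq_exp_ℂ, NormedSpace.exp_eq_tsum_div]
  have hu_abs : ‖∑' k, u k‖ = Real.exp (-x/2) := by
    rw [hu_tsum, Complex.norm_exp,
      show (-(x:ℂ)/2) = ((-x/2:ℝ):ℂ) by push_cast; ring, Complex.ofReal_re]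
  -- split
  have hsplit : (∑' k, t k) = (∑' k, u k) + ∑' k, (t k - u k) := by
    rw [← Summable.tsum_add hu_sum hdiff_sum]
    congr 1
    funext k
    ring
  have hdiff_abs : ‖∑' k, (t k - u k)‖ ≤ ∑' k, V k :=
    tsum_of_norm_bounded hV_sum.hasSum hnorm
  -- tsum of V
  have hey_tsum : (∑' k, y^k / (Nat.factorial k : ℝ)) = Real.exp y := by
    rw [Real.exp_eq_exp_ℝ, NormedSpace.exp_eq_tsum_div]
  have hV_tsum : (∑' k, V k) = (1/(2*τ)) * ((∑' k, w k) - Real.exp y) := by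
    rw [hVdef, tsum_mul_left]
    congr 1
    rw [Summable.tsum_sub hw_sum hey, hey_tsum]
  -- bound on W
  have hW : (∑' k, w k) ≤ Real.exp (-x/2) * (1-x) ^ (-(2+σ) : ℝ) := by
    refine hWle.2.trans ?_
    rw [hydef]
    exact rpow_final σ x hσ0 hσ1 hx0 hx1
  -- main chain
  have hmain : ‖∑' k, t k‖ ≤ Real.exp (-x/2)
      + (1/(2*τ)) * (Real.exp (-x/2) * (1-x) ^ (-(2+σ) : ℝ) - Real.exp y) := by
    rw [hsplit]
    calc ‖(∑' k, u k) + ∑' k, (t k - u k)‖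
        ≤ ‖∑' k, u k‖ + ‖∑' k, (t k - u k)‖ := norm_add_le _ _
      _ ≤ Real.exp (-x/2) + ∑' k, V k := by
          rw [hu_abs]
          linarith [hdiff_abs]
      _ ≤ _ := by
          rw [hV_tsum]
          have := mul_le_mul_of_nonneg_left (sub_le_sub_right hW (Real.exp y))
            (by positivity : (0:ℝ) ≤ 1/(2*τ))
          linarith
  have hgoal_eq : oneF1 a b (-(x:ℂ)) = ∑' k, t k := rfl
  rw [hgoal_eq]
  refine hmain.trans ?_
  have hexp : Real.exp (-x/2) * Real.exp x = Real.exp y := by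
    rw [← Real.exp_add, hydef]
    congr 1
    ring
  have hexpo : (-(2 * (1 + |ρ|)) : ℝ) = -(2+σ) := by rw [hσdef]; ring
  rw [hexpo]
  have h2τ : (0:ℝ) ≤ 1/(2*τ) := by positivity
  nlinarith [hexp]
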